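/- KAM distillation, multiplicative case: if a reachable KAM state s = (λx.t̄ | e | c :: π) makes a multiplicative transition to s' = (t̄ | [x←c] :: e | π), then ⟦s⟧ ⊸ₘ ⟦s'⟧ in the call-by-name linear substitution calculus (where ⊸ₘ is weak-head distance-β reduction). -/

import Mathlib

/-- Terms of the linear substitution calculus:
    `sub t x u` is the explicit substitution `t[x←u]`. -/
inductive Term : Type
  | var : ℕ → Term
  | lam : ℕ → Term → Term
  | app : Term → Term → Term
  | sub : Term → ℕ → Term → Term
deriving DecidableEq

namespace Term

/-- Free variables. -/
def fv : Term → Finset ℕ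
  | var x => {x}
  | lam x t => t.fv.erase x
  | app t u => t.fv ∪ u.fv
  | sub t x u => t.fv.erase x ∪ u.fv

end Term

/-- Substitution contexts `L ::= ⟨·⟩ | L[x←t]`. -/
inductive LCtx : Type
  | hole : LCtx
  | sub : LCtx → ℕ → Term → LCtx
deriving DecidableEq

def LCtx.plug : LCtx → Term → Term
  | .hole, t => t
  | .sub L x u, t => .sub (L.plug t) x u

/-- Weak head contexts `H ::= ⟨·⟩ | H t | H[x←t]`. -/
inductive HCtx : Type
  | hole : HCtx
  | app : HCtx → Term → HCtx
  | sub : HCtx → ℕ → Term → HCtx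
deriving DecidableEq

def HCtx.plug : HCtx → Term → Term
  | .hole, t => t
  | .app H u, t => .app (H.plug t) u
  | .sub H x u, t => .sub (H.plug t) x u

/-- `H.captures x` holds when the hole of `H` lies under a binder for `x`. -/
def HCtx.captures : HCtx → ℕ → Prop
  | .hole, _ => False
  | .app H _, x => H.captures x
  | .sub H y _, x => y = x ∨ H.captures x

/-- Free variables of a weak head context. -/
def HCtx.fv : HCtx → Finset ℕ
  | .hole => ∅
  | .app H t => H.fv ∪ t.fv
  | .sub H y t => H.fv.erase y ∪ t.fv

/-- Multiplicative (weak-head distance-β) reduction: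
    the closure under weak head contexts of `L⟨λx.t⟩ u ↦ L⟨t[x←u]⟩`. -/
inductive Rm : Term → Term → Prop
  | step (H : HCtx) (L : LCtx) (x : ℕ) (t u : Term) :
      Rm (H.plug (.app (L.plug (.lam x t)) u)) (H.plug (L.plug (.sub t x u)))

/-- Exponential (weak linear head substitution) reduction:
    the closure under weak head contexts of `H'⟨x⟩[x←u] ↦ H'⟨u⟩[x←u]`,
    with `x` not captured by `H'`. -/
inductive Re : Term → Term → Prop
  | step (H H' : HCtx) (x : ℕ) (u : Term) :
      ¬ H'.captures x →
      Re (H.plug (.sub (H'.plug (.var x)) x u)) (H.plug (.sub (H'.plug u) x u))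
/-- Pure λ-terms (codes of the machine). -/
inductive PTerm : Type
  | var : ℕ → PTerm
  | lam : ℕ → PTerm → PTerm
  | app : PTerm → PTerm → PTerm
deriving DecidableEq

def PTerm.toTerm : PTerm → Term
  | .var x => .var x
  | .lam x t => .lam x t.toTerm
  | .app t u => .app t.toTerm u.toTerm

def PTerm.fv : PTerm → Finset ℕ
  | .var x => {x}
  | .lam x t => t.fv.erase x
  | .app t u => t.fv ∪ u.fv

def PTerm.size : PTerm → ℕ
  | .var _ => 1
  | .lam _ t => t.size + 1
  | .app t u => t.size + u.size + 1

mutual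
  /-- Closures: a code together with an environment. -/
  inductive Clo : Type
    | mk : PTerm → Env → Clo
  /-- Local environments. -/
  inductive Env : Type
    | nil : Env
    | cons : ℕ → Clo → Env → Env
end

def Env.lookup : Env → ℕ → Option Clo
  | .nil, _ => none
  | .cons y c e, x => if y = x then some c else e.lookup x

mutual
  /-- Decoding of closures: `⟦(t̄,e)⟧ = ⟦e⟧⟨t̄⟩`. -/
  def Clo.decode : Clo → Term
    | .mk t e => Env.decodeIn e t.toTerm
  /-- Decoding of environments as contexts, given as functions on terms:
      `⟦ε⟧ = ⟨·⟩` and `⟦[x←c]::e⟧ = ⟦e⟧⟨⟨·⟩[x←⟦c⟧]⟩`. -/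
  def Env.decodeIn : Env → Term → Term
    | .nil, t => t
    | .cons x c e, t => Env.decodeIn e (.sub t x (Clo.decode c))
end

/-- Decoding of stacks as contexts: `⟦ε⟧ = ⟨·⟩`, `⟦c::π⟧ = ⟦π⟧⟨⟨·⟩ ⟦c⟧⟩`. -/
def stackDecodeIn : List Clo → Term → Term
  | [], t => t
  | c :: π, t => stackDecodeIn π (.app t (Clo.decode c))

/-- KAM states: code, environment, stack. -/
structure KState : Type where
  code : PTerm
  env : Env
  stack : List Clo

/-- Decoding of states: `⟦(t̄ | e | π)⟧ = ⟦π⟧⟨⟦e⟧⟨t̄⟩⟩`. -/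
def KState.decode (s : KState) : Term :=
  stackDecodeIn s.stack (Env.decodeIn s.env s.code.toTerm)

/-- KAM transitions: commutative, multiplicative and exponential. -/
inductive KStep : KState → KState → Prop
  | comm (t u : PTerm) (e : Env) (π : List Clo) :
      KStep ⟨.app t u, e, π⟩ ⟨t, e, Clo.mk u e :: π⟩
  | mul (x : ℕ) (t : PTerm) (e : Env) (c : Clo) (π : List Clo) :
      KStep ⟨.lam x t, e, c :: π⟩ ⟨t, Env.cons x c e, π⟩
  | exp (x : ℕ) (t : PTerm) (e e' : Env) (π : List Clo) :
      e.lookup x = some (Clo.mk t e') →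
      KStep ⟨.var x, e, π⟩ ⟨t, e', π⟩

/-- Initial states: closed code, empty environment and stack. -/
def KState.Initial (s : KState) : Prop :=
  s.code.fv = ∅ ∧ s.env = .nil ∧ s.stack = []

/-- Reachable states. -/
def KState.Reachable (s : KState) : Prop :=
  ∃ s₀, s₀.Initial ∧ Relation.ReflTransGen KStep s₀ s

/-! Decoding an environment yields a substitution context `L` and decoding a stack a weak head
context `H`; a multiplicative transition moves the top closure of the stack into the environment,
which on decodings is the root step `L⟨λx.t⟩ u ↦ L⟨t[x←u]⟩` under `H`. -/

def LCtx.innerSub : LCtx → ℕ → Term → LCtx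
  | .hole, x, u => .sub .hole x u
  | .sub L y v, x, u => .sub (L.innerSub x u) y v

lemma LCtx.plug_innerSub (L : LCtx) (x : ℕ) (u t : Term) :
    (L.innerSub x u).plug t = L.plug (.sub t x u) := by
  induction L with
  | hole => rfl
  | sub L y v ih => simp only [LCtx.innerSub, LCtx.plug, ih]

def HCtx.innerApp : HCtx → Term → HCtx
  | .hole, u => .app .hole u
  | .app H v, u => .app (H.innerApp u) v
  | .sub H y v, u => .sub (H.innerApp u) y v

lemma HCtx.plug_innerApp (H : HCtx) (u t : Term) :
    (H.innerApp u).plug t = H.plug (.app t u) := by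
  induction H with
  | hole => rfl
  | app H v ih => simp only [HCtx.innerApp, HCtx.plug, ih]
  | sub H y v ih => simp only [HCtx.innerApp, HCtx.plug, ih]

def Env.toLCtx : Env → LCtx
  | .nil => .hole
  | .cons x c e => e.toLCtx.innerSub x c.decode

lemma Env.decodeIn_eq_plug : ∀ (e : Env) (t : Term), e.decodeIn t = e.toLCtx.plug t
  | .nil, _ => rfl
  | .cons x c e, t => by
    rw [Env.decodeIn, Env.toLCtx, LCtx.plug_innerSub, Env.decodeIn_eq_plug e]

def stackCtx : List Clo → HCtx
  | [] => .hole
  | c :: π => (stackCtx π).innerApp c.decode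

lemma stackDecodeIn_eq_plug (π : List Clo) (t : Term) :
    stackDecodeIn π t = (stackCtx π).plug t := by
  induction π generalizing t with
  | nil => rfl
  | cons c π ih => simp only [stackDecodeIn, stackCtx, ih, HCtx.plug_innerApp]

lemma KState.decode_eq_plug (s : KState) :
    s.decode = (stackCtx s.stack).plug (s.env.toLCtx.plug s.code.toTerm) := by
  rw [KState.decode, stackDecodeIn_eq_plug, Env.decodeIn_eq_plug]

/-- KAM distillation, multiplicative case: a multiplicative transition of the
    KAM from a reachable state is simulated by a ⊸ₘ (weak-head distance-β)
    step on the decoding. -/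
theorem kam_multiplicative (x : ℕ) (t : PTerm) (e : Env) (c : Clo) (π : List Clo)
    (hreach : KState.Reachable ⟨.lam x t, e, c :: π⟩) :
    Rm (KState.decode ⟨.lam x t, e, c :: π⟩)
       (KState.decode ⟨t, Env.cons x c e, π⟩) := by
  simp only [KState.decode_eq_plug, stackCtx, Env.toLCtx, HCtx.plug_innerApp,
    LCtx.plug_innerSub, PTerm.toTerm]
  exact Rm.step _ _ x t.toTerm c.decode
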